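/- Let G₁ and G₂ be simple undirected graphs on the same finite vertex set V with G₂ a subgraph of G₁. If G₁ is severance-proof, then u_i(G₁) ≥ u_i(G₂) for every vertex i, and consequently Σ_{i∈V} u_i(G₁) ≥ Σ_{i∈V} u_i(G₂). -/

import Mathlib

open scoped Classical

/-- Agent `i`'s payoff in network `G`: sum over agents reachable from `i` of
`δ^(dist-1) * f j`, minus `c` times `i`'s degree. -/
noncomputable def payoff {V : Type*} [Fintype V] (G : SimpleGraph V)
    (f : V → ℝ) (δ c : ℝ) (i : V) : ℝ :=
  (∑ j : V, if j ≠ i ∧ G.Reachable i j then δ ^ (G.dist i j - 1) * f j else 0)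
    - c * (G.degree i : ℝ)

/-- `G` is severance-proof: no agent can strictly gain by severing one of its own links. -/
def SeveranceProof {V : Type*} [Fintype V] (G : SimpleGraph V)
    (f : V → ℝ) (δ c : ℝ) : Prop :=
  ∀ i : V, ∀ e ∈ G.edgeSet, i ∈ e →
    payoff G f δ c i ≥ payoff (G.deleteEdges {e}) f δ c i

/-!
A shortest path from `i` to `j` leaves `i` through a single edge, so deleting any other edge at
`i` does not change what `i` receives from `j`. Hence, if `E` is the set of links of `i` in `G₁`
missing from `G₂ ≤ G₁`, the losses of gross benefit `B_i(G₁) - B_i(G₁ - e)`, `e ∈ E`, add up to at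
most `B_i(G₁) - B_i(G₂)`. Severance-proofness makes each of these losses at least `c`, which pays
for the `|E| = deg_{G₁} i - deg_{G₂} i` extra links of `i` in `G₁`.
-/

namespace SimpleGraph

variable {V : Type*}

lemma le_deleteEdges_singleton {G H : SimpleGraph V} (h : H ≤ G) {e : Sym2 V}
    (he : e ∉ H.edgeSet) : H ≤ G.deleteEdges {e} :=
  calc H = H.deleteEdges {e} :=
        (deleteEdges_eq_self.mpr (Set.disjoint_singleton_right.mpr he)).symm
    _ ≤ G.deleteEdges {e} := deleteEdges_mono h

lemma degree_deleteEdges_singleton_add_one {G : SimpleGraph V} {i : V} {e : Sym2 V}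
    (he : e ∈ G.incidenceSet i) [Fintype (G.neighborSet i)]
    [Fintype ((G.deleteEdges {e}).neighborSet i)] :
    (G.deleteEdges {e}).degree i + 1 = G.degree i := by
  obtain ⟨w, rfl⟩ : ∃ w, s(i, w) = e := ⟨_, Sym2.other_spec he.2⟩
  have hw : w ∈ G.neighborFinset i :=
    (G.mem_neighborFinset i w).mpr ((G.mem_incidenceSet i w).mp he)
  have hnbr : (G.deleteEdges {s(i, w)}).neighborFinset i = (G.neighborFinset i).erase w := by
    ext y
    simp only [mem_neighborFinset, deleteEdges_adj, Set.mem_singleton_iff, Finset.mem_erase,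
      Sym2.congr_right]
    tauto
  rw [degree, degree, hnbr, Finset.card_erase_add_one hw]

end SimpleGraph

section Benefit

variable {V : Type*}

noncomputable def benefit (G : SimpleGraph V) (f : V → ℝ) (δ : ℝ) (i j : V) : ℝ :=
  if j ≠ i ∧ G.Reachable i j then δ ^ (G.dist i j - 1) * f j else 0

noncomputable def grossBenefit [Fintype V] (G : SimpleGraph V) (f : V → ℝ) (δ : ℝ) (i : V) : ℝ :=
  ∑ j, benefit G f δ i j

lemma payoff_eq_grossBenefit_sub [Fintype V] (G : SimpleGraph V) (f : V → ℝ) (δ c : ℝ) (i : V) :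
    payoff G f δ c i = grossBenefit G f δ i - c * G.degree i := by
  unfold payoff grossBenefit benefit
  -- `payoff` decides reachability with an instance that needs `Fintype V`
  congr!

variable {G H : SimpleGraph V} {f : V → ℝ} {δ : ℝ} {i j : V}

lemma benefit_of_not_reachable (h : ¬G.Reachable i j) : benefit G f δ i j = 0 :=
  if_neg fun hr => h hr.2

lemma benefit_nonneg (hf : 0 ≤ f j) (hδ0 : 0 ≤ δ) : 0 ≤ benefit G f δ i j := by
  unfold benefit
  split
  · exact mul_nonneg (pow_nonneg hδ0 _) hf
  · exact le_rfl

lemma benefit_mono (h : H ≤ G) (hf : 0 ≤ f j) (hδ0 : 0 ≤ δ) (hδ1 : δ ≤ 1) :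
    benefit H f δ i j ≤ benefit G f δ i j := by
  by_cases hH : j ≠ i ∧ H.Reachable i j
  · have hG : j ≠ i ∧ G.Reachable i j := ⟨hH.1, hH.2.mono h⟩
    rw [benefit, benefit, if_pos hH, if_pos hG]
    exact mul_le_mul_of_nonneg_right
      (pow_le_pow_of_le_one hδ0 hδ1 (Nat.sub_le_sub_right (hH.2.dist_anti h) 1)) hf
  · rw [benefit, if_neg hH]
    exact benefit_nonneg hf hδ0

lemma benefit_deleteEdges_of_notMem_edges {p : G.Walk i j} (hp : p.length = G.dist i j)
    {e : Sym2 V} (he : e ∉ p.edges) :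
    benefit (G.deleteEdges {e}) f δ i j = benefit G f δ i j := by
  let p' := p.toDeleteEdges {e} fun e' he' h => he (Set.mem_singleton_iff.mp h ▸ he')
  have hreach : (G.deleteEdges {e}).Reachable i j := ⟨p'⟩
  have hdist : (G.deleteEdges {e}).dist i j = G.dist i j := by
    refine le_antisymm ?_ (hreach.dist_anti (G.deleteEdges_le _))
    calc (G.deleteEdges {e}).dist i j ≤ p'.length := SimpleGraph.dist_le p'
      _ = G.dist i j := (p.length_transfer _).trans hp
  simp only [benefit, hreach, p.reachable, hdist]

/-- The exceptional edge is the first edge of a shortest path from `i` to `j`. -/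
lemma exists_benefit_deleteEdges_eq (G : SimpleGraph V) (f : V → ℝ) (δ : ℝ) (i j : V) :
    ∃ x : Sym2 V, ∀ e, i ∈ e → e ≠ x →
      benefit (G.deleteEdges {e}) f δ i j = benefit G f δ i j := by
  by_cases hr : G.Reachable i j
  · obtain ⟨p, hpath, hlen⟩ := hr.exists_path_of_dist
    refine ⟨s(i, p.snd), fun e hie hne => benefit_deleteEdges_of_notMem_edges hlen fun hep => ?_⟩
    rw [← Sym2.other_spec hie] at hep hne
    exact hne (by rw [hpath.eq_snd_of_mem_edges hep])
  · refine ⟨s(i, i), fun e _ _ => ?_⟩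
    rw [benefit_of_not_reachable hr,
      benefit_of_not_reachable fun h => hr (h.mono (G.deleteEdges_le _))]

lemma sum_benefit_sub_deleteEdges_le {G₁ G₂ : SimpleGraph V} (hsub : G₂ ≤ G₁) (hf : 0 ≤ f j)
    (hδ0 : 0 ≤ δ) (hδ1 : δ ≤ 1) {E : Finset (Sym2 V)}
    (hE : ∀ e ∈ E, i ∈ e ∧ G₂ ≤ G₁.deleteEdges {e}) :
    ∑ e ∈ E, (benefit G₁ f δ i j - benefit (G₁.deleteEdges {e}) f δ i j)
      ≤ benefit G₁ f δ i j - benefit G₂ f δ i j := by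
  obtain ⟨x, hx⟩ := exists_benefit_deleteEdges_eq G₁ f δ i j
  have hzero : ∀ e ∈ E, e ≠ x →
      benefit G₁ f δ i j - benefit (G₁.deleteEdges {e}) f δ i j = 0 := fun e he hne => by
    rw [hx e (hE e he).1 hne, sub_self]
  by_cases hxE : x ∈ E
  · rw [Finset.sum_eq_single_of_mem x hxE hzero]
    exact sub_le_sub_left (benefit_mono (hE x hxE).2 hf hδ0 hδ1) _
  · rw [Finset.sum_eq_zero fun e he => hzero e he fun h => hxE (h ▸ he), sub_nonneg]
    exact benefit_mono hsub hf hδ0 hδ1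

end Benefit

namespace SeveranceProof

variable {V : Type*} [Fintype V] {G G₁ G₂ : SimpleGraph V} {f : V → ℝ} {δ c : ℝ}

lemma le_grossBenefit_sub_deleteEdges (hG : SeveranceProof G f δ c) {i : V} {e : Sym2 V}
    (he : e ∈ G.incidenceSet i) :
    c ≤ grossBenefit G f δ i - grossBenefit (G.deleteEdges {e}) f δ i := by
  have hsev := hG i e he.1 he.2
  have hdeg := SimpleGraph.degree_deleteEdges_singleton_add_one he
  rw [ge_iff_le, payoff_eq_grossBenefit_sub, payoff_eq_grossBenefit_sub] at hsev
  -- the degree instances in `hsev` and `hdeg` differ; `Nat.card` is instance-free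
  simp only [← SimpleGraph.card_neighborSet_eq_degree, Fintype.card_eq_nat_card] at hsev hdeg
  rw [← hdeg, Nat.cast_add_one] at hsev
  linarith

lemma payoff_le_of_le (hG₁ : SeveranceProof G₁ f δ c) (hsub : G₂ ≤ G₁) (hf : ∀ v, 0 ≤ f v)
    (hδ0 : 0 ≤ δ) (hδ1 : δ ≤ 1) (i : V) : payoff G₂ f δ c i ≤ payoff G₁ f δ c i := by
  set E := G₁.incidenceFinset i \ G₂.incidenceFinset i
  have hinc : G₂.incidenceFinset i ⊆ G₁.incidenceFinset i := fun e he => by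
    rw [SimpleGraph.mem_incidenceFinset] at he ⊢
    exact ⟨SimpleGraph.edgeSet_mono hsub he.1, he.2⟩
  have hcard : (E.card : ℝ) + G₂.degree i = G₁.degree i := by
    rw [← SimpleGraph.card_incidenceFinset_eq_degree, ← SimpleGraph.card_incidenceFinset_eq_degree]
    exact_mod_cast Finset.card_sdiff_add_card_eq_card hinc
  have hE : ∀ e ∈ E, e ∈ G₁.incidenceSet i ∧ e ∉ G₂.edgeSet := fun e he => by
    rw [Finset.mem_sdiff, SimpleGraph.mem_incidenceFinset, SimpleGraph.mem_incidenceFinset] at he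
    exact ⟨he.1, fun h => he.2 ⟨h, he.1.2⟩⟩
  have hloss : c * E.card ≤ grossBenefit G₁ f δ i - grossBenefit G₂ f δ i :=
    calc c * E.card = ∑ _e ∈ E, c := by rw [Finset.sum_const, nsmul_eq_mul, mul_comm]
      _ ≤ ∑ e ∈ E, (grossBenefit G₁ f δ i - grossBenefit (G₁.deleteEdges {e}) f δ i) :=
        Finset.sum_le_sum fun e he => hG₁.le_grossBenefit_sub_deleteEdges (hE e he).1
      _ = ∑ j, ∑ e ∈ E, (benefit G₁ f δ i j - benefit (G₁.deleteEdges {e}) f δ i j) := by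
        simp only [grossBenefit, ← Finset.sum_sub_distrib]
        exact Finset.sum_comm
      _ ≤ ∑ j, (benefit G₁ f δ i j - benefit G₂ f δ i j) :=
        Finset.sum_le_sum fun j _ => sum_benefit_sub_deleteEdges_le hsub (hf j) hδ0 hδ1
          fun e he => ⟨(hE e he).1.2, SimpleGraph.le_deleteEdges_singleton hsub (hE e he).2⟩
      _ = grossBenefit G₁ f δ i - grossBenefit G₂ f δ i := Finset.sum_sub_distrib _ _
  have hdeg : c * G₁.degree i = c * E.card + c * G₂.degree i := by rw [← hcard, mul_add]
  rw [payoff_eq_grossBenefit_sub, payoff_eq_grossBenefit_sub]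
  linarith

end SeveranceProof

theorem severanceProof_superset_payoff_ge_general
    {V : Type*} [Fintype V] (G₁ G₂ : SimpleGraph V) (hsub : G₂ ≤ G₁)
    (f : V → ℝ) (hf : ∀ v, 0 < f v) (δ : ℝ) (hδ0 : 0 < δ) (hδ1 : δ < 1)
    (c : ℝ)
    (hstable : SeveranceProof G₁ f δ c) :
    (∀ i : V, payoff G₁ f δ c i ≥ payoff G₂ f δ c i) ∧
      ∑ i : V, payoff G₁ f δ c i ≥ ∑ i : V, payoff G₂ f δ c i := by
  have hle : ∀ i, payoff G₂ f δ c i ≤ payoff G₁ f δ c i :=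
    hstable.payoff_le_of_le hsub (fun v => (hf v).le) hδ0.le hδ1.le
  exact ⟨hle, Finset.sum_le_sum fun i _ => hle i⟩

theorem severanceProof_superset_payoff_ge
    {V : Type*} [Fintype V] (G₁ G₂ : SimpleGraph V) (hsub : G₂ ≤ G₁)
    (f : V → ℝ) (hf : ∀ v, 0 < f v) (δ : ℝ) (hδ0 : 0 < δ) (hδ1 : δ < 1)
    (c : ℝ) (hc : 0 < c)
    (hstable : SeveranceProof G₁ f δ c) :
    (∀ i : V, payoff G₁ f δ c i ≥ payoff G₂ f δ c i) ∧
      ∑ i : V, payoff G₁ f δ c i ≥ ∑ i : V, payoff G₂ f δ c i :=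
  severanceProof_superset_payoff_ge_general G₁ G₂ hsub f hf δ hδ0 hδ1 c hstable
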